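/- arXiv:1411.0285 — 5 statements merged into one kernel-verified Lean document; each statement's English description precedes it below -/
import Mathlib

section
/- Let L be a primitive Z_2-submodule of Z_2 ⊕ Z_2 containing a primitive vector u whose first coordinate is a 2-adic unit, and suppose the index of L in Z_2 ⊕ Z_2 has 2-adic valuation d < ∞. Then for each 0 ≤ i ≤ d, the submodule generated by u and (0, 2^i) is the unique primitive submodule of Z_2 ⊕ Z_2 containing L whose index has 2-adic valuation i. -/
/-!
Write `wedge u w = u₁ w₂ - u₂ w₁` for the determinant of the columns `u, w`. When `u₁` is a unit
and `u ∈ M`, subtracting `w₁ u₁⁻¹ • u` from `w` shows that `w ∈ M` iff `(0, wedge u w) ∈ M`, so `M`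
is the preimage under the surjection `wedge u` of the ideal `{y | (0, y) ∈ M}` and has the same
index. Over `ℤ_[p]` the only ideal of index `p ^ j` is `(p ^ j)`, so `M` is the span of `u` and
`(0, p ^ j)`, and these preimages are nested as the ideals `(p ^ j)` are.
-/

def PrimVec (u : ℤ_[2] × ℤ_[2]) : Prop := IsUnit u.1 ∨ IsUnit u.2

def PrimSub (L : Submodule ℤ_[2] (ℤ_[2] × ℤ_[2])) : Prop := ∃ u ∈ L, PrimVec u

section Wedge

variable {R : Type*} [CommRing R]

def wedge (u : R × R) : (R × R) →ₗ[R] R :=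
  u.1 • LinearMap.snd R R R - u.2 • LinearMap.fst R R R

@[simp]
lemma wedge_apply (u w : R × R) : wedge u w = u.1 * w.2 - u.2 * w.1 := rfl

variable {u : R × R}

lemma wedge_surjective (hu : IsUnit u.1) : Function.Surjective (wedge u) := fun r =>
  ⟨(0, ↑hu.unit⁻¹ * r), by simp [← mul_assoc]⟩

lemma mem_iff_inr_wedge_mem {M : Submodule R (R × R)} (huM : u ∈ M) (hu : IsUnit u.1)
    (w : R × R) : w ∈ M ↔ ((0 : R), wedge u w) ∈ M := by
  have hw : ((0 : R), wedge u w) = u.1 • w - w.1 • u := by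
    ext <;> simp only [wedge_apply, Prod.fst_sub, Prod.snd_sub, Prod.smul_fst, Prod.smul_snd,
      smul_eq_mul] <;> ring
  rw [hw, ← M.smul_mem_iff_of_isUnit hu, M.sub_mem_iff_left (M.smul_mem _ huM)]

lemma eq_comap_wedge_comap_inr {M : Submodule R (R × R)} (huM : u ∈ M) (hu : IsUnit u.1) :
    M = (M.comap (LinearMap.inr R R R)).comap (wedge u) := by
  ext w
  exact mem_iff_inr_wedge_mem huM hu w

lemma span_pair_eq_comap_wedge (hu : IsUnit u.1) (c : R) :
    Submodule.span R {u, ((0 : R), c)} = Submodule.comap (wedge u) (Ideal.span {c}) := by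
  have huS : u ∈ Submodule.span R {u, ((0 : R), c)} := Submodule.subset_span (by simp)
  refine le_antisymm (Submodule.span_le.mpr ?_) fun w hw => ?_
  · rintro w (rfl | rfl) <;> simp [mul_comm, Ideal.mem_span_singleton]
  · obtain ⟨t, ht⟩ := Ideal.mem_span_singleton'.mp hw
    rw [mem_iff_inr_wedge_mem huS hu, ← ht, show ((0 : R), t * c) = t • ((0 : R), c) by simp]
    exact Submodule.smul_mem _ t (Submodule.subset_span (by simp))

lemma index_comap_wedge (hu : IsUnit u.1) (I : Ideal R) :
    (Submodule.comap (wedge u) I).toAddSubgroup.index = I.toAddSubgroup.index :=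
  AddSubgroup.index_comap_of_surjective I.toAddSubgroup (f := (wedge u).toAddMonoidHom)
    (wedge_surjective hu)

end Wedge

namespace PadicInt

variable {p : ℕ} [Fact p.Prime]

lemma index_span_pow (n : ℕ) : (Ideal.span {(p : ℤ_[p]) ^ n}).toAddSubgroup.index = p ^ n := by
  rw [AddSubgroup.index_eq_card, ← ker_toZModPow]
  exact (Nat.card_congr (RingHom.quotientKerEquivOfSurjective
    (ZMod.ringHom_surjective (toZModPow (p := p) n))).toEquiv).trans (Nat.card_zmod _)

lemma eq_span_pow_of_index {I : Ideal ℤ_[p]} {n : ℕ} (h : I.toAddSubgroup.index = p ^ n) :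
    I = Ideal.span {(p : ℤ_[p]) ^ n} := by
  have hI : I ≠ ⊥ := by
    rintro rfl
    rw [Submodule.bot_toAddSubgroup, AddSubgroup.index_bot, Nat.card_eq_zero_of_infinite] at h
    exact (pow_ne_zero n (Fact.out : p.Prime).ne_zero) h.symm
  obtain ⟨e, rfl⟩ := IsDiscreteValuationRing.ideal_eq_span_pow_irreducible hI irreducible_p
  rw [index_span_pow] at h
  rw [Nat.pow_right_injective (Fact.out : p.Prime).two_le h]

variable {u : ℤ_[p] × ℤ_[p]}

lemma index_span_pair (hu : IsUnit u.1) (n : ℕ) :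
    (Submodule.span ℤ_[p] {u, ((0 : ℤ_[p]), (p : ℤ_[p]) ^ n)}).toAddSubgroup.index = p ^ n := by
  rw [span_pair_eq_comap_wedge hu, index_comap_wedge hu, index_span_pow]

lemma eq_span_pair_of_index {M : Submodule ℤ_[p] (ℤ_[p] × ℤ_[p])} (huM : u ∈ M)
    (hu : IsUnit u.1) {n : ℕ} (h : M.toAddSubgroup.index = p ^ n) :
    M = Submodule.span ℤ_[p] {u, ((0 : ℤ_[p]), (p : ℤ_[p]) ^ n)} := by
  rw [span_pair_eq_comap_wedge hu]
  rw [eq_comap_wedge_comap_inr huM hu, index_comap_wedge hu] at h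
  rw [← eq_span_pow_of_index h, ← eq_comap_wedge_comap_inr huM hu]

end PadicInt

theorem stmt3 (L : Submodule ℤ_[2] (ℤ_[2] × ℤ_[2])) (u : ℤ_[2] × ℤ_[2])
    (hu : u ∈ L) (hu1 : IsUnit u.1) (d : ℕ)
    (hd : L.toAddSubgroup.index = 2 ^ d)
    (i : ℕ) (hi : i ≤ d) :
    L ≤ Submodule.span ℤ_[2] {u, ((0 : ℤ_[2]), (2 : ℤ_[2]) ^ i)} ∧
    (Submodule.span ℤ_[2] {u, ((0 : ℤ_[2]), (2 : ℤ_[2]) ^ i)}).toAddSubgroup.index = 2 ^ i ∧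
    PrimSub (Submodule.span ℤ_[2] {u, ((0 : ℤ_[2]), (2 : ℤ_[2]) ^ i)}) ∧
    ∀ M : Submodule ℤ_[2] (ℤ_[2] × ℤ_[2]), L ≤ M → PrimSub M →
      M.toAddSubgroup.index = 2 ^ i →
      M = Submodule.span ℤ_[2] {u, ((0 : ℤ_[2]), (2 : ℤ_[2]) ^ i)} := by
  refine ⟨?_, by simpa using PadicInt.index_span_pair (p := 2) hu1 i,
    ⟨u, Submodule.subset_span (by simp), Or.inl hu1⟩, fun M hLM _ hM => ?_⟩
  · rw [PadicInt.eq_span_pair_of_index hu hu1 hd, span_pair_eq_comap_wedge hu1,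
      span_pair_eq_comap_wedge hu1]
    exact Submodule.comap_mono (Ideal.span_singleton_le_span_singleton.mpr (by
      simpa using pow_dvd_pow (2 : ℤ_[2]) hi))
  · simpa using PadicInt.eq_span_pair_of_index (hLM hu) hu1 hM
end

section
/- Let {Γ, B} be a balanced 3-valent graph with minimal vertex multiplicity M({Γ, B}) = 0. Then the number of vertices of Γ of multiplicity 0 is even. -/
noncomputable def pdet (u v : ℤ_[2] × ℤ_[2]) : ℤ_[2] := u.1 * v.2 - u.2 * v.1

lemma pad_dvd_iff (x : ℤ_[2]) : (2:ℤ_[2]) ∣ x ↔ PadicInt.toZMod x = 0 := by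
  rw [← RingHom.mem_ker, PadicInt.ker_toZMod, PadicInt.maximalIdeal_eq_span_p,
    Ideal.mem_span_singleton]
  norm_num

lemma key0 (a b c d e f : ZMod 2) (h1 : a + c + e = 0) (h2 : b + d + f = 0)
    (hd : a * d - b * c ≠ 0) :
    ((if a = 1 ∧ b = 1 then 1 else 0) + (if c = 1 ∧ d = 1 then 1 else 0)
      + (if e = 1 ∧ f = 1 then 1 else 0) : ZMod 2) = 1 := by
  revert h1 h2 hd; revert a b c d e f; decide

lemma key1 (a b c d e f : ZMod 2) (h1 : a + c + e = 0) (h2 : b + d + f = 0)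
    (hd : a * d - b * c = 0) :
    ((if a = 1 ∧ b = 1 then 1 else 0) + (if c = 1 ∧ d = 1 then 1 else 0)
      + (if e = 1 ∧ f = 1 then 1 else 0) : ZMod 2) = 0 := by
  revert h1 h2 hd; revert a b c d e f; decide

open Finset in
theorem stmt11 {V E : Type} [Fintype V] [Fintype E] [DecidableEq V] [DecidableEq E]
    (rev : E → E) (head : E → V) (B : E → ℤ_[2] × ℤ_[2])
    (hrev : ∀ e, rev (rev e) = e) (hrevne : ∀ e, rev e ≠ e)
    (hcubic : ∀ v : V, (Finset.univ.filter fun e => head e = v).card = 3)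
    (hBrev : ∀ e, B (rev e) = - B e)
    (hBsum : ∀ v : V, ∑ e ∈ Finset.univ.filter (fun e => head e = v), B e = 0)
    (m : V → ℕ∞)
    (hm : ∀ (v : V) (e1 e2 : E), e1 ≠ e2 → head e1 = v → head e2 = v →
      m v = emultiplicity (2 : ℤ_[2]) (pdet (B e1) (B e2)))
    (hmin : ∃ v : V, m v = 0) :
    Even ((Finset.univ.filter fun v : V => m v = 0).card) := by
  classical
  set φ : ℤ_[2] →+* ZMod 2 := PadicInt.toZMod with hφ
  let P : E → Prop := fun e => φ (B e).1 = 1 ∧ φ (B e).2 = 1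
  have hneg : ∀ x : ZMod 2, -x = x := by decide
  have hPrev : ∀ e, P e → P (rev e) := by
    intro e he
    have h1 : (B (rev e)).1 = -(B e).1 := by rw [hBrev, Prod.fst_neg]
    have h2 : (B (rev e)).2 = -(B e).2 := by rw [hBrev, Prod.snd_neg]
    refine ⟨?_, ?_⟩
    · rw [h1, map_neg, hneg]; exact he.1
    · rw [h2, map_neg, hneg]; exact he.2

  -- global count is even
  have hglob : ((univ.filter P).card : ZMod 2) = 0 := by
    have h := Finset.sum_involution (s := univ.filter P) (f := fun _ => (1 : ZMod 2))
      (fun a _ => rev a) (fun a _ => show (1:ZMod 2) + 1 = 0 by decide) (fun a _ _ => hrevne a)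
      (fun a ha => by
        simp only [Finset.mem_filter, Finset.mem_univ, true_and] at ha ⊢
        exact hPrev a ha)
      (fun a _ => hrev a)
    simpa using h
  -- fiberwise decomposition
  have hfib : ((univ.filter P).card : ZMod 2)
      = ∑ v : V, (((univ.filter fun e => head e = v).filter P).card : ZMod 2) := by
    have h := Finset.card_eq_sum_card_fiberwise
      (s := univ.filter P) (t := univ) (f := head) (fun e _ => Finset.mem_univ _)
    have heq : ∀ v : V, (univ.filter P).filter (fun e => head e = v)
        = (univ.filter fun e => head e = v).filter P := by
      intro v
      rw [Finset.filter_filter, Finset.filter_filter]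
      exact Finset.filter_congr (fun e _ => and_comm)
    rw [h]
    push_cast
    exact Finset.sum_congr rfl fun v _ => by rw [heq]
  -- per-vertex count
  have hvert : ∀ v : V, (((univ.filter fun e => head e = v).filter P).card : ZMod 2)
      = if m v = 0 then 1 else 0 := by
    intro v
    obtain ⟨e1, e2, e3, h12, h13, h23, hset⟩ := Finset.card_eq_three.mp (hcubic v)
    have hmem : ∀ e ∈ ({e1, e2, e3} : Finset E), head e = v := by
      intro e he
      have : e ∈ univ.filter fun e => head e = v := hset ▸ he
      exact (Finset.mem_filter.mp this).2
    have he1 : head e1 = v := hmem e1 (by simp)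
    have he2 : head e2 = v := hmem e2 (by simp)
    have hsum := hBsum v
    rw [hset, Finset.sum_insert (by simp [h12, h13]),
      Finset.sum_insert (by simp [h23]), Finset.sum_singleton] at hsum
    have hs1 : φ (B e1).1 + φ (B e2).1 + φ (B e3).1 = 0 := by
      have := congrArg (fun p : ℤ_[2] × ℤ_[2] => φ p.1) hsum
      simpa [add_assoc] using this
    have hs2 : φ (B e1).2 + φ (B e2).2 + φ (B e3).2 = 0 := by
      have := congrArg (fun p : ℤ_[2] × ℤ_[2] => φ p.2) hsum
      simpa [add_assoc] using this
    have hcard : (((univ.filter fun e => head e = v).filter P).card : ZMod 2)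
        = (if P e1 then 1 else 0) + (if P e2 then 1 else 0) + (if P e3 then 1 else 0) := by
      rw [hset, Finset.card_filter, Finset.sum_insert (by simp [h12, h13]),
        Finset.sum_insert (by simp [h23]), Finset.sum_singleton]
      push_cast
      ring
    have hmv := hm v e1 e2 h12 he1 he2
    have hdet : φ (pdet (B e1) (B e2)) = φ (B e1).1 * φ (B e2).2 - φ (B e1).2 * φ (B e2).1 := by
      simp [pdet, map_sub, map_mul]
    by_cases hv : m v = 0
    · rw [hv] at hmv
      have hnd : ¬ (2:ℤ_[2]) ∣ pdet (B e1) (B e2) := emultiplicity_eq_zero.mp hmv.symm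
      rw [pad_dvd_iff] at hnd
      rw [if_pos hv, hcard]
      exact key0 _ _ _ _ _ _ hs1 hs2 (by rw [← hdet]; exact hnd)
    · have hd : (2:ℤ_[2]) ∣ pdet (B e1) (B e2) := by
        by_contra hc
        exact hv (hmv.trans (emultiplicity_eq_zero.mpr hc))
      rw [pad_dvd_iff] at hd
      rw [if_neg hv, hcard]
      exact key1 _ _ _ _ _ _ hs1 hs2 (by rw [← hdet]; exact hd)
    -- conclude
  have hfinal : (((univ.filter fun v : V => m v = 0).card : ℕ) : ZMod 2) = 0 := by
    rw [Finset.card_filter]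
    push_cast
    calc (∑ v : V, if m v = 0 then (1:ZMod 2) else 0)
        = ∑ v : V, (((univ.filter fun e => head e = v).filter P).card : ZMod 2) :=
          Finset.sum_congr rfl fun v _ => (hvert v).symm
      _ = ((univ.filter P).card : ZMod 2) := hfib.symm
      _ = 0 := hglob
  rw [even_iff_two_dvd]
  exact (ZMod.natCast_eq_zero_iff _ 2).mp hfinal
end

section
/- Let {Γ, B} be a balanced 3-valent graph with M({Γ, B}) > 0. Then the set of primitive edges forms a disjoint union of cycles in Γ: every vertex is incident to either 0 or exactly 2 primitive edges. -/
lemma toZMod_ne_zero_iff_isUnit (z : ℤ_[2]) : PadicInt.toZMod z ≠ 0 ↔ IsUnit z := by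
  have h1 : PadicInt.toZMod z = 0 ↔ (2 : ℤ_[2]) ∣ z := by
    rw [← RingHom.mem_ker, PadicInt.ker_toZMod, PadicInt.maximalIdeal_eq_span_p,
      Ideal.mem_span_singleton]
    norm_num
  rw [← not_not (a := IsUnit z), PadicInt.not_isUnit_iff, PadicInt.norm_lt_one_iff_dvd]
  constructor
  · intro h h2; exact h (h1.mpr (by exact_mod_cast h2))
  · intro h h2; exact h (by exact_mod_cast h1.mp h2)

lemma key : ∀ a1 a2 b1 b2 c1 c2 : ZMod 2,
    a1 + b1 + c1 = 0 → a2 + b2 + c2 = 0 →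
    a1 * b2 - a2 * b1 = 0 → a1 * c2 - a2 * c1 = 0 →
    b1 * c2 - b2 * c1 = 0 →
    ((a1 = 0 ∧ a2 = 0) ∧ (b1 = 0 ∧ b2 = 0) ∧ (c1 = 0 ∧ c2 = 0)) ∨
    ((a1 = 0 ∧ a2 = 0) ∧ ¬(b1 = 0 ∧ b2 = 0) ∧ ¬(c1 = 0 ∧ c2 = 0)) ∨
    (¬(a1 = 0 ∧ a2 = 0) ∧ (b1 = 0 ∧ b2 = 0) ∧ ¬(c1 = 0 ∧ c2 = 0)) ∨
    (¬(a1 = 0 ∧ a2 = 0) ∧ ¬(b1 = 0 ∧ b2 = 0) ∧ (c1 = 0 ∧ c2 = 0)) := by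
  have h2 : ∀ x : ZMod 2, x = 0 ∨ x = 1 := by decide
  intro a1 a2 b1 b2 c1 c2
  rcases h2 a1 with rfl|rfl <;> rcases h2 a2 with rfl|rfl <;>
    rcases h2 b1 with rfl|rfl <;> rcases h2 b2 with rfl|rfl <;>
    rcases h2 c1 with rfl|rfl <;> rcases h2 c2 with rfl|rfl <;> decide

open Finset in
open scoped Classical in
theorem stmt12 {V E : Type} [Fintype V] [Fintype E] [DecidableEq V] [DecidableEq E]
    (rev : E → E) (head : E → V) (B : E → ℤ_[2] × ℤ_[2])
    (hrev : ∀ e, rev (rev e) = e) (hrevne : ∀ e, rev e ≠ e)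
    (hcubic : ∀ v : V, (Finset.univ.filter fun e => head e = v).card = 3)
    (hBrev : ∀ e, B (rev e) = - B e)
    (hBsum : ∀ v : V, ∑ e ∈ Finset.univ.filter (fun e => head e = v), B e = 0)
    (m : V → ℕ∞)
    (hm : ∀ (v : V) (e1 e2 : E), e1 ≠ e2 → head e1 = v → head e2 = v →
      m v = emultiplicity (2 : ℤ_[2]) (pdet (B e1) (B e2)))
    (hpos : ∀ v : V, m v ≠ 0) :
    ∀ v : V, (Finset.univ.filter fun e : E => head e = v ∧ PrimVec (B e)).card = 0 ∨
      (Finset.univ.filter fun e : E => head e = v ∧ PrimVec (B e)).card = 2 := by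
  intro v
  obtain ⟨e1, e2, e3, h12, h13, h23, hS⟩ := Finset.card_eq_three.mp (hcubic v)
  have hmem : ∀ e : E, head e = v ↔ (e = e1 ∨ e = e2 ∨ e = e3) := by
    intro e
    have : e ∈ Finset.univ.filter (fun e => head e = v) ↔
        e ∈ ({e1, e2, e3} : Finset E) := by rw [hS]
    simpa using this
  have he1 : head e1 = v := (hmem e1).mpr (Or.inl rfl)
  have he2 : head e2 = v := (hmem e2).mpr (Or.inr (Or.inl rfl))
  have he3 : head e3 = v := (hmem e3).mpr (Or.inr (Or.inr rfl))
  -- pairwise divisibility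
  have hdvd : ∀ ea eb : E, ea ≠ eb → head ea = v → head eb = v →
      (2 : ℤ_[2]) ∣ pdet (B ea) (B eb) := by
    intro ea eb hne ha hb
    by_contra h
    exact hpos v ((hm v ea eb hne ha hb).trans (emultiplicity_eq_zero.mpr h))
  -- sum of B over the three edges
  have hsum : B e1 + B e2 + B e3 = 0 := by
    have := hBsum v
    rw [hS] at this
    rwa [Finset.sum_insert (by simp [h12, h13]), Finset.sum_insert (by simp [h23]),
      Finset.sum_singleton, ← add_assoc] at this
  set φ := (PadicInt.toZMod : ℤ_[2] →+* ZMod 2)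
  have hzero : ∀ e : E, ¬ PrimVec (B e) ↔ (φ (B e).1 = 0 ∧ φ (B e).2 = 0) := by
    intro e
    rw [PrimVec, ← toZMod_ne_zero_iff_isUnit, ← toZMod_ne_zero_iff_isUnit]
    tauto
  have hdet : ∀ ea eb : E, ea ≠ eb → head ea = v → head eb = v →
      φ (B ea).1 * φ (B eb).2 - φ (B ea).2 * φ (B eb).1 = 0 := by
    intro ea eb hne ha hb
    obtain ⟨c, hc⟩ := hdvd ea eb hne ha hb
    have : φ (pdet (B ea) (B eb)) = 0 := by
      rw [hc, map_mul]
      have : φ 2 = 0 := by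
        have : ((2 : ℕ) : ℤ_[2]) = (2 : ℤ_[2]) := by norm_num
        rw [← this, map_natCast]; decide
      rw [this, zero_mul]
    simpa [pdet, map_sub, map_mul] using this
  have hs1 : φ (B e1).1 + φ (B e2).1 + φ (B e3).1 = 0 := by
    have := congrArg (fun u : ℤ_[2] × ℤ_[2] => φ u.1) hsum
    simpa [map_add] using this
  have hs2 : φ (B e1).2 + φ (B e2).2 + φ (B e3).2 = 0 := by
    have := congrArg (fun u : ℤ_[2] × ℤ_[2] => φ u.2) hsum
    simpa [map_add] using this
  have hk := key (φ (B e1).1) (φ (B e1).2) (φ (B e2).1) (φ (B e2).2)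
    (φ (B e3).1) (φ (B e3).2) hs1 hs2
    (hdet e1 e2 h12 he1 he2) (hdet e1 e3 h13 he1 he3) (hdet e2 e3 h23 he2 he3)
  -- rewrite the filter
  have hfil : (Finset.univ.filter fun e : E => head e = v ∧ PrimVec (B e)) =
      ({e1, e2, e3} : Finset E).filter (fun e => PrimVec (B e)) := by
    rw [← hS, Finset.filter_filter]
  rw [hfil]
  have hcard : (({e1, e2, e3} : Finset E).filter (fun e => PrimVec (B e))).card =
      (if PrimVec (B e1) then 1 else 0) + (if PrimVec (B e2) then 1 else 0) +
      (if PrimVec (B e3) then 1 else 0) := by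
    rw [show ({e1, e2, e3} : Finset E) = insert e1 (insert e2 {e3}) from rfl,
      Finset.filter_insert, Finset.filter_insert, Finset.filter_singleton]
    by_cases p1 : PrimVec (B e1) <;> by_cases p2 : PrimVec (B e2) <;>
      by_cases p3 : PrimVec (B e3) <;>
      simp [p1, p2, p3, h12, h13, h23, Finset.card_insert_of_notMem]
  rw [hcard]
  have hprim : ∀ e : E, PrimVec (B e) ↔ ¬(φ (B e).1 = 0 ∧ φ (B e).2 = 0) := by
    intro e; exact (not_iff_comm.mp (hzero e)).symm
  rcases hk with ⟨ha, hb, hc⟩ | ⟨ha, hb, hc⟩ | ⟨ha, hb, hc⟩ | ⟨ha, hb, hc⟩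
  · left
    rw [if_neg ((hzero e1).mpr ha), if_neg ((hzero e2).mpr hb), if_neg ((hzero e3).mpr hc)]
  · right
    rw [if_neg ((hzero e1).mpr ha), if_pos ((hprim e2).mpr hb), if_pos ((hprim e3).mpr hc)]
  · right
    rw [if_pos ((hprim e1).mpr ha), if_neg ((hzero e2).mpr hb), if_pos ((hprim e3).mpr hc)]
  · right
    rw [if_pos ((hprim e1).mpr ha), if_pos ((hprim e2).mpr hb), if_neg ((hzero e3).mpr hc)]
end

section
/- Let {Γ, B} be a balanced 3-valent graph with M({Γ, B}) > 0, and let C be a cycle of Γ all of whose edges are primitive, with at least one vertex of finite multiplicity. Then among the lattices L(v) of the vertices v of C there is a maximal one L(C) containing all the others. -/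
/-!
Take a vertex `v₀` of the cycle of minimal multiplicity `k` (finite by hypothesis). By Cramer's
rule, `2^k (ℤ₂ × ℤ₂) ⊆ L(v₀)`. Consecutive edges `e, e'` of the cycle meet at a vertex of
multiplicity at least `k`, so `2^k ∣ det(B e, B e')`; as `B e` is primitive, this forces
`B e' ≡ β B e (mod 2^k)`. Hence membership in `L(v₀)` propagates around the cycle from the edge
leaving `v₀`, and every `L(v)` on the cycle, spanned by the vectors of its two cycle edges, lies
in `L(v₀)`.
-/

theorem IsDiscreteValuationRing.dvd_pow_of_emultiplicity_eq {R : Type*} [CommRing R] [IsDomain R]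
    [IsDiscreteValuationRing R] {ϖ x : R} (hϖ : Irreducible ϖ) {k : ℕ}
    (h : emultiplicity ϖ x = k) : x ∣ ϖ ^ k := by
  have hx : x ≠ 0 := by
    rintro rfl
    simp at h
  obtain ⟨n, hn⟩ := IsDiscreteValuationRing.associated_pow_irreducible hx hϖ
  rw [emultiplicity_eq_of_associated_right hn, emultiplicity_pow_self_of_prime hϖ.prime,
    Nat.cast_inj] at h
  exact h ▸ hn.dvd

theorem PadicInt.irreducible_two : Irreducible (2 : ℤ_[2]) := by
  simpa using PadicInt.irreducible_p (p := 2)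

theorem ZMod.forall_of_forall_add_one {n : ℕ} [NeZero n] {P : ZMod n → Prop} {i : ZMod n}
    (hi : P i) (hstep : ∀ j, P j → P (j + 1)) (j : ZMod n) : P j := by
  have key : ∀ t : ℕ, P (i + t) := by
    intro t
    induction t with
    | zero => simpa using hi
    | succ t ih => simpa [add_assoc] using hstep _ ih
  simpa using key (j - i).val

lemma pdet_neg_right (u v : ℤ_[2] × ℤ_[2]) : pdet u (-v) = -pdet u v := by
  simp only [pdet, Prod.fst_neg, Prod.snd_neg]
  ring

lemma pdet_smul_mem_span (a b w : ℤ_[2] × ℤ_[2]) :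
    pdet a b • w ∈ Submodule.span ℤ_[2] {a, b} := by
  have cramer : pdet a b • w = pdet w b • a + pdet a w • b := by
    ext <;> simp only [pdet, Prod.smul_fst, Prod.smul_snd, Prod.fst_add, Prod.snd_add,
      smul_eq_mul] <;> ring
  rw [cramer]
  exact Submodule.add_mem _ (Submodule.smul_mem _ _ (Submodule.subset_span (by simp)))
    (Submodule.smul_mem _ _ (Submodule.subset_span (by simp)))

lemma PrimVec.exists_eq_smul_add_pdet_smul {u : ℤ_[2] × ℤ_[2]} (hu : PrimVec u)
    (w : ℤ_[2] × ℤ_[2]) : ∃ (β : ℤ_[2]) (e : ℤ_[2] × ℤ_[2]), w = β • u + pdet u w • e := by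
  rcases hu with ⟨r, hr⟩ | ⟨r, hr⟩
  · refine ⟨w.1 * ↑r⁻¹, (0, ↑r⁻¹), ?_⟩
    refine Prod.ext ?_ ?_ <;> simp only [pdet, ← hr, Prod.smul_fst, Prod.smul_snd,
      Prod.fst_add, Prod.snd_add, smul_eq_mul]
    · linear_combination (-w.1) * r.mul_inv
    · linear_combination (-w.2) * r.mul_inv
  · refine ⟨w.2 * ↑r⁻¹, (-↑r⁻¹, 0), ?_⟩
    refine Prod.ext ?_ ?_ <;> simp only [pdet, ← hr, Prod.smul_fst, Prod.smul_snd,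
      Prod.fst_add, Prod.snd_add, smul_eq_mul]
    · linear_combination (-w.1) * r.mul_inv
    · linear_combination (-w.2) * r.mul_inv

lemma PrimVec.mem_of_dvd_pdet {S : Submodule ℤ_[2] (ℤ_[2] × ℤ_[2])} {d : ℤ_[2]}
    (hS : ∀ w, d • w ∈ S) {u v : ℤ_[2] × ℤ_[2]} (hu : PrimVec u) (huS : u ∈ S)
    (hd : d ∣ pdet u v) : v ∈ S := by
  obtain ⟨β, e, hv⟩ := hu.exists_eq_smul_add_pdet_smul v
  obtain ⟨r, hr⟩ := hd
  rw [hv, hr, mul_comm, mul_smul]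
  exact S.add_mem (S.smul_mem β huS) (S.smul_mem r (hS e))

open Finset in
theorem stmt13_general {V E : Type}
    (rev : E → E) (head : E → V) (B : E → ℤ_[2] × ℤ_[2])
    (hBrev : ∀ e, B (rev e) = - B e)
    (m : V → ℕ∞)
    (hm : ∀ (v : V) (e1 e2 : E), e1 ≠ e2 → head e1 = v → head e2 = v →
      m v = emultiplicity (2 : ℤ_[2]) (pdet (B e1) (B e2)))
    (L : V → Submodule ℤ_[2] (ℤ_[2] × ℤ_[2]))
    (hL : ∀ (v : V) (e1 e2 : E), e1 ≠ e2 → head e1 = v → head e2 = v →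
      L v = Submodule.span ℤ_[2] {B e1, B e2})
    (n : ℕ) [NeZero n] (c : ZMod n → E)
    (hcyc : ∀ i : ZMod n, head (rev (c (i + 1))) = head (c i))
    (hcnr : ∀ i j : ZMod n, c i ≠ rev (c j))
    (hcprim : ∀ i : ZMod n, PrimVec (B (c i)))
    (hfin : ∃ i : ZMod n, m (head (c i)) ≠ ⊤) :
    ∃ i : ZMod n, ∀ j : ZMod n, L (head (c j)) ≤ L (head (c i)) := by
  have hLc (j : ZMod n) : L (head (c j)) = Submodule.span ℤ_[2] {B (c j), B (rev (c (j + 1)))} :=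
    hL _ _ _ (hcnr j (j + 1)) rfl (hcyc j)
  have hmc (j : ZMod n) :
      m (head (c j)) = emultiplicity (2 : ℤ_[2]) (pdet (B (c j)) (B (rev (c (j + 1))))) :=
    hm _ _ _ (hcnr j (j + 1)) rfl (hcyc j)
  obtain ⟨i, -, hmin⟩ := exists_min_image univ (fun j => m (head (c j))) univ_nonempty
  obtain ⟨jf, hjf⟩ := hfin
  obtain ⟨k, hk⟩ := ENat.ne_top_iff_exists.1 (ne_top_of_le_ne_top hjf (hmin jf (mem_univ _)))
  have hdvd (j : ZMod n) : (2 : ℤ_[2]) ^ k ∣ pdet (B (c j)) (B (c (j + 1))) := by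
    rw [← neg_neg (B (c (j + 1))), ← hBrev, pdet_neg_right, dvd_neg]
    exact pow_dvd_of_le_emultiplicity (hk ▸ hmc j ▸ hmin j (mem_univ j))
  have hfull (w : ℤ_[2] × ℤ_[2]) : (2 : ℤ_[2]) ^ k • w ∈ L (head (c i)) := by
    obtain ⟨r, hr⟩ := IsDiscreteValuationRing.dvd_pow_of_emultiplicity_eq
      PadicInt.irreducible_two (hmc i ▸ hk.symm)
    rw [hLc, hr, mul_smul]
    exact pdet_smul_mem_span _ _ _
  have hstart : B (c i) ∈ L (head (c i)) := by
    rw [hLc]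
    exact Submodule.subset_span (by simp)
  have hmem : ∀ j, B (c j) ∈ L (head (c i)) :=
    ZMod.forall_of_forall_add_one hstart fun j hj => (hcprim j).mem_of_dvd_pdet hfull hj (hdvd j)
  refine ⟨i, fun j => ?_⟩
  rw [hLc j, Submodule.span_le, Set.insert_subset_iff, Set.singleton_subset_iff, hBrev]
  exact ⟨hmem j, neg_mem (hmem (j + 1))⟩

open Finset in
theorem stmt13 {V E : Type} [Fintype V] [Fintype E] [DecidableEq V] [DecidableEq E]
    (rev : E → E) (head : E → V) (B : E → ℤ_[2] × ℤ_[2])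
    (hrev : ∀ e, rev (rev e) = e) (hrevne : ∀ e, rev e ≠ e)
    (hcubic : ∀ v : V, (Finset.univ.filter fun e => head e = v).card = 3)
    (hBrev : ∀ e, B (rev e) = - B e)
    (hBsum : ∀ v : V, ∑ e ∈ Finset.univ.filter (fun e => head e = v), B e = 0)
    (m : V → ℕ∞)
    (hm : ∀ (v : V) (e1 e2 : E), e1 ≠ e2 → head e1 = v → head e2 = v →
      m v = emultiplicity (2 : ℤ_[2]) (pdet (B e1) (B e2)))
    (L : V → Submodule ℤ_[2] (ℤ_[2] × ℤ_[2]))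
    (hL : ∀ (v : V) (e1 e2 : E), e1 ≠ e2 → head e1 = v → head e2 = v →
      L v = Submodule.span ℤ_[2] {B e1, B e2})
    (hpos : ∀ v : V, m v ≠ 0)
    (n : ℕ) [NeZero n] (c : ZMod n → E)
    (hcyc : ∀ i : ZMod n, head (rev (c (i + 1))) = head (c i))
    (hcinj : ∀ i j : ZMod n, c i = c j → i = j)
    (hcnr : ∀ i j : ZMod n, c i ≠ rev (c j))
    (hcprim : ∀ i : ZMod n, PrimVec (B (c i)))
    (hfin : ∃ i : ZMod n, m (head (c i)) ≠ ⊤) :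
    ∃ i : ZMod n, ∀ j : ZMod n, L (head (c j)) ≤ L (head (c i)) :=
  stmt13_general rev head B hBrev m hm L hL n c hcyc hcnr hcprim hfin
end

section
/- Let {Γ, B} be a balanced 3-valent graph, C a primitive cycle of Γ with maximal lattice L(C) of finite multiplicity, and suppose M({Γ, B}) > 0. Then for every edge f joining a vertex of C to a vertex not in C, the vector B(f) lies in L(C)^0, the sublattice of non-primitive vectors of L(C). -/
lemma two_cast' : ((2:ℕ):ℤ_[2]) = 2 := by norm_num

lemma prime_two' : Prime (2:ℤ_[2]) := two_cast' ▸ PadicInt.prime_p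

lemma toZMod_eq_zero' (x : ℤ_[2]) : PadicInt.toZMod x = 0 ↔ (2:ℤ_[2]) ∣ x := by
  rw [← RingHom.mem_ker, PadicInt.ker_toZMod, PadicInt.maximalIdeal_eq_span_p,
    Ideal.mem_span_singleton]
  norm_num

lemma isUnit_iff'' (x : ℤ_[2]) : IsUnit x ↔ PadicInt.toZMod x ≠ 0 := by
  rw [Ne, toZMod_eq_zero']
  constructor
  · rintro h ⟨y, rfl⟩
    exact prime_two'.not_unit (isUnit_of_mul_isUnit_left h)
  · intro h
    by_contra hu
    have : x ∈ Ideal.span {(2:ℤ_[2])} := by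
      rw [← two_cast', ← PadicInt.maximalIdeal_eq_span_p]
      exact (IsLocalRing.mem_maximalIdeal x).mpr (mem_nonunits_iff.mpr hu)
    exact h (Ideal.mem_span_singleton.mp this)

lemma zmod2key' : ∀ a b c d : ZMod 2, (a ≠ 0 ∨ b ≠ 0) → (c ≠ 0 ∨ d ≠ 0) →
    a * d - b * c = 0 → a = c ∧ b = d := by decide

lemma nonprim_sub (u w : ℤ_[2] × ℤ_[2]) (hu : PrimVec u) (hw : PrimVec w)
    (hdvd : (2:ℤ_[2]) ∣ pdet u w) : ¬ PrimVec (u - w) := by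
  have key := zmod2key' (PadicInt.toZMod u.1) (PadicInt.toZMod u.2)
    (PadicInt.toZMod w.1) (PadicInt.toZMod w.2)
    (by rcases hu with h | h <;> [left; right] <;> exact (isUnit_iff'' _).mp h)
    (by rcases hw with h | h <;> [left; right] <;> exact (isUnit_iff'' _).mp h)
    (by
      have : PadicInt.toZMod (pdet u w) = 0 := (toZMod_eq_zero' _).mpr hdvd
      simpa [pdet, map_sub, map_mul] using this)
  rintro (h | h)
  · exact (isUnit_iff'' _).mp h (by simp [map_sub, key.1])
  · exact (isUnit_iff'' _).mp h (by simp [map_sub, key.2])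

open Finset in
theorem stmt15 {V E : Type} [Fintype V] [Fintype E] [DecidableEq V] [DecidableEq E]
    (rev : E → E) (head : E → V) (B : E → ℤ_[2] × ℤ_[2])
    (hrev : ∀ e, rev (rev e) = e) (hrevne : ∀ e, rev e ≠ e)
    (hcubic : ∀ v : V, (Finset.univ.filter fun e => head e = v).card = 3)
    (hBrev : ∀ e, B (rev e) = - B e)
    (hBsum : ∀ v : V, ∑ e ∈ Finset.univ.filter (fun e => head e = v), B e = 0)
    (m : V → ℕ∞)
    (hm : ∀ (v : V) (e1 e2 : E), e1 ≠ e2 → head e1 = v → head e2 = v →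
      m v = emultiplicity (2 : ℤ_[2]) (pdet (B e1) (B e2)))
    (L : V → Submodule ℤ_[2] (ℤ_[2] × ℤ_[2]))
    (hL : ∀ (v : V) (e1 e2 : E), e1 ≠ e2 → head e1 = v → head e2 = v →
      L v = Submodule.span ℤ_[2] {B e1, B e2})
    (hpos : ∀ v : V, m v ≠ 0)
    (n : ℕ) [NeZero n] (c : ZMod n → E)
    (hcyc : ∀ i : ZMod n, head (rev (c (i + 1))) = head (c i))
    (hcinj : ∀ i j : ZMod n, c i = c j → i = j)
    (hcnr : ∀ i j : ZMod n, c i ≠ rev (c j))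
    (hcprim : ∀ i : ZMod n, PrimVec (B (c i)))
    (LC : Submodule ℤ_[2] (ℤ_[2] × ℤ_[2]))
    (hLCmem : ∃ i : ZMod n, L (head (c i)) = LC)
    (hLCmax : ∀ i : ZMod n, L (head (c i)) ≤ LC)
    (hLCfin : LC.toAddSubgroup.index ≠ 0) :
    ∀ f : E, (∃ i : ZMod n, head (rev f) = head (c i)) →
      (∀ i : ZMod n, head f ≠ head (c i)) →
      B f ∈ LC ∧ ¬ PrimVec (B f) := by
  rintro f ⟨i, hfi⟩ hfnot
  set v := head (c i) with hv
  set e1 := c i with he1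
  set e2 := rev (c (i + 1)) with he2
  set e3 := rev f with he3
  have h1 : head e1 = v := rfl
  have h2 : head e2 = v := hcyc i
  have h3 : head e3 = v := hfi
  have ne12 : e1 ≠ e2 := hcnr i (i + 1)
  have ne13 : e1 ≠ e3 := by
    intro h
    have hf : f = rev (c i) := by rw [← hrev f, ← he3, ← h]
    have : head f = head (c (i - 1)) := by
      rw [hf]
      have := hcyc (i - 1)
      rwa [sub_add_cancel] at this
    exact hfnot (i - 1) this
  have ne23 : e2 ≠ e3 := by
    intro h
    have hf : f = c (i + 1) := by
      have := congrArg rev h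
      rwa [he2, he3, hrev, hrev, eq_comm] at this
    exact hfnot (i + 1) (by rw [hf])
  -- the set of edges at v is exactly {e1, e2, e3}
  have tcard : ({e1, e2, e3} : Finset E).card = 3 := by
    rw [card_insert_of_notMem (by simp [ne12, ne13]),
      card_insert_of_notMem (by simp [ne23]), card_singleton]
  have tsub : ({e1, e2, e3} : Finset E) ⊆ Finset.univ.filter (fun e => head e = v) := by
    intro e he
    simp only [mem_insert, mem_singleton] at he
    rcases he with rfl | rfl | rfl <;> simp [mem_filter, h1, h2, h3]
  have hS : ({e1, e2, e3} : Finset E) = Finset.univ.filter (fun e => head e = v) :=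
    Finset.eq_of_subset_of_card_le tsub (by rw [hcubic v, tcard])
  have hsum : B e1 + (B e2 + B e3) = 0 := by
    have := hBsum v
    rw [← hS, Finset.sum_insert (by simp [ne12, ne13]),
      Finset.sum_insert (by simp [ne23]), Finset.sum_singleton] at this
    exact this
  have hrf : B e3 = - B f := hBrev f
  rw [hrf] at hsum
  have hBf : B f = B e1 + B e2 := by linear_combination -hsum
  constructor
  · rw [hBf]
    have hLv : L v = Submodule.span ℤ_[2] {B e1, B e2} := hL v e1 e2 ne12 h1 h2
    refine hLCmax i ?_
    rw [← hv, hLv]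
    exact add_mem (Submodule.subset_span (Set.mem_insert _ _))
      (Submodule.subset_span (Set.mem_insert_of_mem _ rfl))
  · intro hp
    have hmv := hm v e1 e3 ne13 h1 h3
    have hdvd0 : (2:ℤ_[2]) ∣ pdet (B e1) (B e3) := by
      have := hpos v
      rw [hmv] at this
      by_contra hnd
      exact this (emultiplicity_eq_zero.mpr hnd)
    have hdvd : (2:ℤ_[2]) ∣ pdet (B e1) (B f) := by
      have heq : pdet (B e1) (B e3) = - pdet (B e1) (B f) := by
        rw [hrf]; simp [pdet]; ring
      rw [heq, dvd_neg] at hdvd0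
      exact hdvd0
    have hnp := nonprim_sub (B e1) (B f) (hcprim i) hp hdvd
    have : B e1 - B f = B (c (i + 1)) := by
      have h2' : B e2 = - B (c (i + 1)) := hBrev (c (i + 1))
      rw [hBf, h2']; ring
    rw [this] at hnp
    exact hnp (hcprim (i + 1))
end
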